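/- arXiv:1708.08260 — 3 statements merged into one kernel-verified Lean document; each statement's English description precedes it below -/
import Mathlib

section
/- Let H be a complex Hilbert space, B a C*-subalgebra of B(H), ξ ∈ H a vector, and R > 0 a constant such that ‖a‖ ≤ R · ‖a ξ‖ for all a ∈ B. Then B is finite-dimensional as a complex vector space. -/
/-!
Since `a ↦ a ξ` is bounded below on `B`, pairwise orthogonal self-adjoint elements of norm
one in `B` send `ξ` to pairwise orthogonal vectors of norm at least `1 / R` whose sum has norm
at most `‖ξ‖`; by Pythagoras there are at most `R² ‖ξ‖²` of them. In a C⋆-algebra with such a bound,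
every self-adjoint element has finite spectrum (disjoint bumps at many spectral points would give
a large orthogonal family), so its nonzero spectral values give projections. A maximal orthogonal
family of nonzero projections then consists of minimal projections `p`, with `p B p = ℂ p`, and
its sum `e` is a unit for `B`. So `B = ∑ p B q` over pairs from the family, and each corner
`p B q` is at most one-dimensional.
-/

open scoped InnerProductSpace

local notation "σₙ" => quasispectrum

lemma sum_pow_eq_sum_pow_of_pairwise_mul_eq_zero {ι R : Type*} [Fintype ι] [Semiring R]
    {x : ι → R} (hx : Pairwise fun i j => x i * x j = 0) {n : ℕ} (hn : n ≠ 0) :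
    (∑ i, x i) ^ n = ∑ i, x i ^ n := by
  induction n with
  | zero => contradiction
  | succ n ih =>
    rcases eq_or_ne n 0 with rfl | hn
    · simp
    obtain ⟨m, rfl⟩ := Nat.exists_eq_succ_of_ne_zero hn
    rw [pow_succ, ih hn, Finset.sum_mul_sum]
    refine Finset.sum_congr rfl fun i _ => ?_
    rw [Finset.sum_eq_single i (fun j _ hji => by rw [pow_succ, mul_assoc, hx hji.symm, mul_zero])
      (by simp), ← pow_succ]

lemma norm_sum_le_one_of_pairwise_mul_eq_zero {ι E : Type*} [Fintype ι] [NormedRing E]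
    [StarRing E] [CStarRing E] {x : ι → E} (hsa : ∀ i, IsSelfAdjoint (x i))
    (hle : ∀ i, ‖x i‖ ≤ 1) (hx : Pairwise fun i j => x i * x j = 0) :
    ‖∑ i, x i‖ ≤ 1 := by
  have hpow (k : ℕ) : ‖∑ i, x i‖ ^ 2 ^ k ≤ Fintype.card ι := calc
    ‖∑ i, x i‖ ^ 2 ^ k = ‖∑ i, x i ^ 2 ^ k‖ := by
      rw [← sum_pow_eq_sum_pow_of_pairwise_mul_eq_zero hx (by positivity),
        (isSelfAdjoint_sum _ fun i _ => hsa i).norm_pow_two_pow]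
    _ ≤ ∑ i, ‖x i ^ 2 ^ k‖ := norm_sum_le _ _
    _ ≤ ∑ _i : ι, (1 : ℝ) := Finset.sum_le_sum fun i _ => by
      rw [(hsa i).norm_pow_two_pow]
      exact pow_le_one₀ (norm_nonneg _) (hle i)
    _ = Fintype.card ι := by simp
  by_contra! h
  obtain ⟨k, hk⟩ := pow_unbounded_of_one_lt (Fintype.card ι : ℝ) h
  exact (hpow k).not_gt (hk.trans_le (pow_le_pow_right₀ h.le Nat.lt_two_pow_self.le))

lemma IsSelfAdjoint.star_mul_of_isSelfAdjoint {R : Type*} [Mul R] [StarMul R] {x y : R}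
    (hx : IsSelfAdjoint x) (hy : IsSelfAdjoint y) : star (x * y) = y * x := by
  rw [star_mul, hx.star_eq, hy.star_eq]

lemma IsStarProjection.norm_eq_one {E : Type*} [NonUnitalNormedRing E] [StarRing E] [CStarRing E]
    {p : E} (hp : IsStarProjection p) (hp0 : p ≠ 0) : ‖p‖ = 1 := by
  have h := CStarRing.norm_star_mul_self (x := p)
  rw [hp.isSelfAdjoint.star_eq, hp.isIdempotentElem.eq] at h
  exact (mul_eq_left₀ (norm_ne_zero_iff.mpr hp0)).mp h.symm

lemma norm_sum_sq_eq_sum_norm_sq_of_pairwise_inner_eq_zero {𝕜 E ι : Type*} [RCLike 𝕜]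
    [NormedAddCommGroup E] [InnerProductSpace 𝕜 E] [Fintype ι] {v : ι → E}
    (hv : Pairwise fun i j => ⟪v i, v j⟫_𝕜 = 0) :
    ‖∑ i, v i‖ ^ 2 = ∑ i, ‖v i‖ ^ 2 := by
  have : ((‖∑ i, v i‖ ^ 2 : ℝ) : 𝕜) = ((∑ i, ‖v i‖ ^ 2 : ℝ) : 𝕜) := by
    push_cast
    rw [← inner_self_eq_norm_sq_to_K, sum_inner]
    refine Finset.sum_congr rfl fun i _ => ?_
    rw [inner_sum, Finset.sum_eq_single i (fun j _ hji => hv hji.symm) (by simp),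
      inner_self_eq_norm_sq_to_K]
  exact_mod_cast this

lemma sum_norm_apply_sq_le {ι H : Type*} [Fintype ι] [NormedAddCommGroup H]
    [InnerProductSpace ℂ H] [CompleteSpace H] {x : ι → H →L[ℂ] H}
    (hsa : ∀ i, IsSelfAdjoint (x i)) (hle : ∀ i, ‖x i‖ ≤ 1)
    (hx : Pairwise fun i j => x i * x j = 0) (ξ : H) :
    ∑ i, ‖x i ξ‖ ^ 2 ≤ ‖ξ‖ ^ 2 := by
  have horth : Pairwise fun i j => ⟪x i ξ, x j ξ⟫_ℂ = 0 := fun i j hij => by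
    dsimp only
    rw [← (hsa i).adjoint_eq, ContinuousLinearMap.adjoint_inner_left]
    change ⟪ξ, (x i * x j) ξ⟫_ℂ = 0
    rw [hx hij, zero_apply, inner_zero_right]
  calc ∑ i, ‖x i ξ‖ ^ 2 = ‖(∑ i, x i) ξ‖ ^ 2 := by
        rw [sum_apply, norm_sum_sq_eq_sum_norm_sq_of_pairwise_inner_eq_zero horth]
    _ ≤ (1 * ‖ξ‖) ^ 2 := by
        gcongr
        exact (ContinuousLinearMap.le_opNorm _ _).trans <| by
          gcongr; exact norm_sum_le_one_of_pairwise_mul_eq_zero hsa hle hx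
    _ = ‖ξ‖ ^ 2 := by rw [one_mul]

lemma Set.Finite.exists_continuous_bump_family {X : Type*} [TopologicalSpace X] [NormalSpace X]
    [T2Space X] {s : Set X} (hs : s.Finite) :
    ∃ f : X → C(X, ℝ), (∀ x, f x x = 1) ∧ (∀ x y, f x y ∈ Set.Icc 0 1) ∧
      ∀ x ∈ s, ∀ y ∈ s, x ≠ y → ∀ z, f x z * f y z = 0 := by
  obtain ⟨U, hU, hdisj⟩ := hs.t2_separation
  have hsep (x : X) : Disjoint (U x)ᶜ {x} := Set.disjoint_singleton_right.mpr fun h => h (hU x).1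
  choose f hf0 hf1 hf01 using fun x =>
    exists_continuous_zero_one_of_isClosed (hU x).2.isClosed_compl isClosed_singleton (hsep x)
  refine ⟨f, fun x => hf1 x rfl, hf01, fun x hx y hy hxy z => ?_⟩
  by_cases hz : z ∈ U x
  · have : z ∉ U y := Set.disjoint_left.mp (hdisj hx hy hxy) hz
    rw [hf0 y this, Pi.zero_apply, mul_zero]
  · rw [hf0 x hz, Pi.zero_apply, zero_mul]

def OrthogonalFamiliesCardLE (A : Type*) [Mul A] [Zero A] [Star A] [Norm A] (N : ℕ) : Prop :=
  ∀ (n : ℕ) (x : Fin n → A), (∀ i, IsSelfAdjoint (x i) ∧ ‖x i‖ = 1) →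
    Pairwise (fun i j => x i * x j = 0) → n ≤ N

section CStarAlgebra

variable {A : Type*} [NonUnitalCStarAlgebra A] {N : ℕ}

lemma IsSelfAdjoint.card_le_of_subset_quasispectrum (hA : OrthogonalFamiliesCardLE A N) {a : A}
    (ha : IsSelfAdjoint a) {t : Finset ℝ} (ht : ↑t ⊆ σₙ ℝ a \ {0}) : t.card ≤ N := by
  obtain ⟨f, hf1, hf01, hforth⟩ := (t.finite_toSet.insert 0).exists_continuous_bump_family
  have hf0 {s : ℝ} (hs : s ∈ t) : f s 0 = 0 := by
    simpa [hf1] using hforth s (Set.mem_insert_of_mem _ hs) 0 (Set.mem_insert 0 _)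
      (fun h => (ht hs).2 h) 0
  have hnorm {s : ℝ} (hs : s ∈ t) : ‖cfcₙ (f s) a‖ = 1 := by
    refine le_antisymm (norm_cfcₙ_le fun z _ => ?_) ?_
    · rw [Real.norm_of_nonneg (hf01 s z).1]
      exact (hf01 s z).2
    · simpa [hf1] using norm_apply_le_norm_cfcₙ (f s) a (ht hs).1 (hf₀ := hf0 hs)
  have hmul {s u : ℝ} (hs : s ∈ t) (hu : u ∈ t) (hsu : s ≠ u) :
      cfcₙ (f s) a * cfcₙ (f u) a = 0 := by
    rw [← cfcₙ_mul _ _ a (hf0 := hf0 hs) (hg0 := hf0 hu),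
      funext (hforth s (Set.mem_insert_of_mem _ hs) u (Set.mem_insert_of_mem _ hu) hsu),
      cfcₙ_const_zero]
  let pt := t.equivFin.symm
  exact hA _ (fun i => cfcₙ (f (pt i)) a) (fun i => ⟨cfcₙ_predicate _ a, hnorm (pt i).2⟩)
    fun i j hij => hmul (pt i).2 (pt j).2 fun h => hij (pt.injective (Subtype.ext h))

lemma IsSelfAdjoint.quasispectrum_finite (hA : OrthogonalFamiliesCardLE A N) {a : A}
    (ha : IsSelfAdjoint a) : (σₙ ℝ a).Finite := by
  suffices (σₙ ℝ a \ {0}).Finite from (this.union (Set.finite_singleton 0)).subset (by simp)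
  by_contra hinf
  obtain ⟨t, ht, hcard⟩ := Set.Infinite.exists_subset_card_eq hinf (N + 1)
  have := ha.card_le_of_subset_quasispectrum hA ht
  omega

lemma cfcₙ_eq_cfcₙ_div_mul_self {a : A} (ha : IsSelfAdjoint a) (hfin : (σₙ ℝ a).Finite)
    {f : ℝ → ℝ} (hf0 : f 0 = 0) : cfcₙ f a = cfcₙ (fun t => f t / t) a * a := by
  have h := cfcₙ_mul (fun t => f t / t) (fun t => t) a (hfin.continuousOn _) (by simp)
  rw [cfcₙ_id' ℝ a] at h
  rw [← h]
  refine cfcₙ_congr fun t _ => ?_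
  rcases eq_or_ne t 0 with rfl | ht
  · simp [hf0]
  · field_simp

lemma isStarProjection_cfcₙ_single {a : A} (ha : IsSelfAdjoint a) (hfin : (σₙ ℝ a).Finite)
    {s : ℝ} (hs : s ≠ 0) : IsStarProjection (cfcₙ (Pi.single s 1) a) := by
  refine isStarProjection_iff_quasispectrum_subset_and_isSelfAdjoint.mpr
    ⟨?_, cfcₙ_predicate _ a⟩
  rw [cfcₙ_map_quasispectrum _ a (hfin.continuousOn _) (by simp [hs.symm])]
  rintro _ ⟨t, -, rfl⟩
  by_cases ht : t = s <;> simp [ht]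

lemma cfcₙ_single_ne_zero {a : A} (ha : IsSelfAdjoint a) (hfin : (σₙ ℝ a).Finite)
    {s : ℝ} (hs : s ∈ σₙ ℝ a) (hs0 : s ≠ 0) : cfcₙ (Pi.single s 1) a ≠ 0 := by
  intro h
  have := norm_apply_le_norm_cfcₙ (Pi.single s 1) a hs (hfin.continuousOn _)
    (by simp [hs0.symm])
  norm_num [h] at this

lemma cfcₙ_single_mul_cfcₙ_single {a : A} (hfin : (σₙ ℝ a).Finite) {s u : ℝ} (hs : s ≠ 0)
    (hu : u ≠ 0) (hsu : s ≠ u) : cfcₙ (Pi.single s 1) a * cfcₙ (Pi.single u 1) a = 0 := by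
  rw [← cfcₙ_mul _ _ a (hfin.continuousOn _) (by simp [hs.symm]) (hfin.continuousOn _)
    (by simp [hu.symm])]
  refine (cfcₙ_congr fun t _ => ?_).trans (cfcₙ_const_zero ℝ a)
  by_cases ht : t = s <;> simp [ht, hsu]

lemma eq_smul_cfcₙ_single {a : A} (ha : IsSelfAdjoint a) (hfin : (σₙ ℝ a).Finite)
    {s : ℝ} (hs : σₙ ℝ a ⊆ {0, s}) : a = s • cfcₙ (Pi.single s 1) a := by
  rcases eq_or_ne s 0 with rfl | hs0
  · simp only [zero_smul]
    exact CFC.eq_zero_of_quasispectrum_eq_zero a (by simpa using hs)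
  rw [← cfcₙ_smul s _ a (hfin.continuousOn _) (by simp [hs0.symm])]
  conv_lhs => rw [← cfcₙ_id' ℝ a]
  refine cfcₙ_congr fun t ht => ?_
  rcases hs ht with rfl | rfl <;> simp [hs0.symm]

def IsOrthogonalProjections (F : Finset A) : Prop :=
  (∀ p ∈ F, IsStarProjection p ∧ p ≠ 0) ∧ (F : Set A).Pairwise fun p q => p * q = 0

def IsMaxOrthogonalProjections (F : Finset A) : Prop :=
  IsOrthogonalProjections F ∧ ∀ G : Finset A, IsOrthogonalProjections G → G.card ≤ F.card

lemma IsOrthogonalProjections.card_le (hA : OrthogonalFamiliesCardLE A N) {F : Finset A}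
    (hF : IsOrthogonalProjections F) : F.card ≤ N := by
  let p := F.equivFin.symm
  exact hA _ (fun i => p i) (fun i => ⟨(hF.1 _ (p i).2).1.isSelfAdjoint,
    (hF.1 _ (p i).2).1.norm_eq_one (hF.1 _ (p i).2).2⟩)
    fun i j hij => hF.2 (p i).2 (p j).2 fun h => hij (p.injective (Subtype.ext h))

lemma IsOrthogonalProjections.insert [DecidableEq A] {F : Finset A}
    (hF : IsOrthogonalProjections F) {q : A} (hq : IsStarProjection q) (hq0 : q ≠ 0)
    (hqF : ∀ p ∈ F, q * p = 0 ∧ p * q = 0) : IsOrthogonalProjections (insert q F) := by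
  refine ⟨Finset.forall_mem_insert _ _ _ |>.mpr ⟨⟨hq, hq0⟩, hF.1⟩, ?_⟩
  rw [Finset.coe_insert, Set.pairwise_insert]
  exact ⟨hF.2, fun p hp _ => hqF p hp⟩

lemma exists_isMaxOrthogonalProjections (hA : OrthogonalFamiliesCardLE A N) :
    ∃ F : Finset A, IsMaxOrthogonalProjections F := by
  let cards := {n | ∃ F : Finset A, IsOrthogonalProjections F ∧ F.card = n}
  have hbdd : BddAbove cards := ⟨N, by rintro _ ⟨F, hF, rfl⟩; exact hF.card_le hA⟩
  have hempty : IsOrthogonalProjections (∅ : Finset A) := by simp [IsOrthogonalProjections]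
  obtain ⟨F, hF, hcard⟩ := Nat.sSup_mem (⟨0, ∅, hempty, rfl⟩ : cards.Nonempty) hbdd
  exact ⟨F, hF, fun G hG => hcard ▸ le_csSup hbdd ⟨G, hG, rfl⟩⟩

namespace IsMaxOrthogonalProjections

variable {F : Finset A}

lemma eq_zero_of_forall_mul_eq_zero (hF : IsMaxOrthogonalProjections F) {q : A}
    (hq : IsStarProjection q) (hqF : ∀ p ∈ F, q * p = 0) : q = 0 := by
  classical
  by_contra hq0
  have hpq (p) (hp : p ∈ F) : p * q = 0 := by
    rw [← hq.isSelfAdjoint.star_mul_of_isSelfAdjoint (hF.1.1 p hp).1.isSelfAdjoint, hqF p hp,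
      star_zero]
  have hqnot : q ∉ F := fun h => hq0 (by simpa [hq.isIdempotentElem.eq] using hqF q h)
  have := hF.2 _ (hF.1.insert hq hq0 fun p hp => ⟨hqF p hp, hpq p hp⟩)
  rw [Finset.card_insert_of_notMem hqnot] at this
  omega

/-- Replacing `p` by `p - q` gives another maximal family, to which `q` is orthogonal. -/
lemma eq_of_mul_eq_self (hF : IsMaxOrthogonalProjections F) {p q : A} (hp : p ∈ F)
    (hq : IsStarProjection q) (hq0 : q ≠ 0) (hqp : q * p = q) : q = p := by
  classical
  by_contra hne
  obtain ⟨hpP, -⟩ := hF.1.1 p hp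
  have hpq : p * q = q := by
    rw [← hq.isSelfAdjoint.star_mul_of_isSelfAdjoint hpP.isSelfAdjoint, hqp,
      hq.isSelfAdjoint.star_eq]
  have hr := hq.sub_of_mul_eq_left hpP hqp
  have hrp : (p - q) * p = p - q := by rw [sub_mul, hpP.isIdempotentElem.eq, hqp]
  have hpF (s) (hs : s ∈ F.erase p) : s * p = 0 ∧ p * s = 0 :=
    ⟨hF.1.2 (Finset.mem_of_mem_erase hs) hp (Finset.ne_of_mem_erase hs),
      hF.1.2 hp (Finset.mem_of_mem_erase hs) (Finset.ne_of_mem_erase hs).symm⟩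
  have hqF (s) (hs : s ∈ F.erase p) : q * s = 0 := by
    rw [← hqp, mul_assoc, (hpF s hs).2, mul_zero]
  have hrnot : p - q ∉ F.erase p := fun h =>
    sub_ne_zero.mpr (Ne.symm hne) (by rw [← hrp, (hpF _ h).1])
  have hG : IsMaxOrthogonalProjections (insert (p - q) (F.erase p)) := by
    have hFp : IsOrthogonalProjections (F.erase p) :=
      ⟨fun s hs => hF.1.1 s (Finset.mem_of_mem_erase hs), hF.1.2.mono (by simp)⟩
    refine ⟨hFp.insert hr (sub_ne_zero.mpr (Ne.symm hne)) fun s hs => ⟨?_, ?_⟩, fun G hG => ?_⟩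
    · rw [sub_mul, (hpF s hs).2, hqF s hs, sub_zero]
    · rw [mul_sub, (hpF s hs).1, ← hpq, ← mul_assoc, (hpF s hs).1, zero_mul, sub_zero]
    · rw [Finset.card_insert_of_notMem hrnot, Finset.card_erase_add_one hp]
      exact hF.2 G hG
  refine hq0 (hG.eq_zero_of_forall_mul_eq_zero hq fun s hs => ?_)
  rcases Finset.mem_insert.mp hs with rfl | hs
  · rw [mul_sub, hqp, hq.isIdempotentElem.eq, sub_self]
  · exact hqF s hs

lemma exists_eq_real_smul (hA : OrthogonalFamiliesCardLE A N)
    (hF : IsMaxOrthogonalProjections F) {p y : A} (hp : p ∈ F) (hy : IsSelfAdjoint y)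
    (hyp : y * p = y) : ∃ r : ℝ, y = r • p := by
  have hfin := hy.quasispectrum_finite hA
  have hq {s : ℝ} (hs : s ∈ σₙ ℝ y) (hs0 : s ≠ 0) : cfcₙ (Pi.single s 1) y = p := by
    refine hF.eq_of_mul_eq_self hp (isStarProjection_cfcₙ_single hy hfin hs0)
      (cfcₙ_single_ne_zero hy hfin hs hs0) ?_
    rw [cfcₙ_eq_cfcₙ_div_mul_self hy hfin (by simp [hs0.symm]), mul_assoc, hyp]
  by_cases h : σₙ ℝ y ⊆ {0}
  · exact ⟨0, by rw [zero_smul]; exact CFC.eq_zero_of_quasispectrum_eq_zero y h⟩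
  obtain ⟨s, hs, hs0⟩ := Set.not_subset.mp h
  refine ⟨s, (eq_smul_cfcₙ_single hy hfin fun u hu => ?_).trans (by rw [hq hs hs0])⟩
  by_contra hu'
  simp only [Set.mem_insert_iff, Set.mem_singleton_iff, not_or] at hu' hs0
  have := cfcₙ_single_mul_cfcₙ_single hfin hs0 hu'.1 (Ne.symm hu'.2)
  rw [hq hs hs0, hq hu hu'.1, (hF.1.1 p hp).1.isIdempotentElem.eq] at this
  exact (hF.1.1 p hp).2 this

lemma exists_mul_mul_eq_smul (hA : OrthogonalFamiliesCardLE A N)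
    (hF : IsMaxOrthogonalProjections F) {p : A} (hp : p ∈ F) (x : A) :
    ∃ c : ℂ, p * x * p = c • p := by
  obtain ⟨hpP, -⟩ := hF.1.1 p hp
  have hreal {w : A} (hw : IsSelfAdjoint w) : ∃ r : ℝ, p * w * p = r • p := by
    refine hF.exists_eq_real_smul hA hp ?_ (by rw [mul_assoc, hpP.isIdempotentElem.eq])
    simpa [hpP.isSelfAdjoint.star_eq] using hw.conjugate p
  obtain ⟨r₁, hr₁⟩ := hreal (realPart x).prop
  obtain ⟨r₂, hr₂⟩ := hreal (imaginaryPart x).prop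
  refine ⟨r₁ + r₂ * Complex.I, ?_⟩
  conv_lhs => rw [← realPart_add_I_smul_imaginaryPart x]
  rw [mul_add, add_mul, mul_smul_comm, smul_mul_assoc, hr₁, hr₂, add_smul, mul_smul,
    Complex.coe_smul, Complex.coe_smul, smul_comm]

/-- If `x ≠ x e`, a nonzero spectral projection of `(x - x e)⋆ (x - x e)` would be orthogonal to
the whole family. -/
lemma mul_sum_eq_self (hA : OrthogonalFamiliesCardLE A N) (hF : IsMaxOrthogonalProjections F)
    (x : A) : x * ∑ p ∈ F, p = x := by
  set e := ∑ p ∈ F, p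
  have hep {p : A} (hp : p ∈ F) : e * p = p := by
    rw [Finset.sum_mul, Finset.sum_eq_single_of_mem p hp fun q hq hqp => hF.1.2 hq hp hqp,
      (hF.1.1 p hp).1.isIdempotentElem.eq]
  have hee : e * e = e :=
    (Finset.mul_sum F (fun p => p) e).trans (Finset.sum_congr rfl fun p hp => hep hp)
  have hce : (x - x * e) * e = 0 := by rw [sub_mul, mul_assoc, hee, sub_self]
  set z := star (x - x * e) * (x - x * e)
  have hz : IsSelfAdjoint z := .star_mul_self _
  have hze : z * e = 0 := by rw [mul_assoc, hce, mul_zero]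
  suffices z = 0 by rwa [CStarRing.star_mul_self_eq_zero_iff, sub_eq_zero, eq_comm] at this
  by_contra hz0
  have hfin := hz.quasispectrum_finite hA
  obtain ⟨s, hs, hs0⟩ : ∃ s ∈ σₙ ℝ z, s ≠ 0 := by
    by_contra! h
    exact hz0 (CFC.eq_zero_of_quasispectrum_eq_zero z h)
  refine cfcₙ_single_ne_zero hz hfin hs hs0 <| hF.eq_zero_of_forall_mul_eq_zero
    (isStarProjection_cfcₙ_single hz hfin hs0) fun p hp => ?_
  rw [← hep hp, cfcₙ_eq_cfcₙ_div_mul_self hz hfin (by simp [hs0.symm]), mul_assoc,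
    ← mul_assoc z, hze, zero_mul, mul_zero]

lemma sum_mul_eq_self (hA : OrthogonalFamiliesCardLE A N) (hF : IsMaxOrthogonalProjections F)
    (x : A) : (∑ p ∈ F, p) * x = x := by
  have he : IsSelfAdjoint (∑ p ∈ F, p) :=
    isSelfAdjoint_sum F fun p hp => (hF.1.1 p hp).1.isSelfAdjoint
  calc (∑ p ∈ F, p) * x = star (star x * ∑ p ∈ F, p) := by rw [star_mul, he.star_eq, star_star]
    _ = x := by rw [hF.mul_sum_eq_self hA, star_star]

end IsMaxOrthogonalProjections

/-- For `w = p x₀ q ≠ 0`, `w⋆ w ∈ ℂ q` is nonzero and `(p x q) w⋆ ∈ ℂ p`, so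
`c₁ • p x q = (p x q) w⋆ w = c₂ • w`. -/
lemma IsStarProjection.exists_mul_mul_mem_span_singleton {p q : A} (hp : IsStarProjection p)
    (hq : IsStarProjection q) (hpA : ∀ x, ∃ c : ℂ, p * x * p = c • p)
    (hqA : ∀ x, ∃ c : ℂ, q * x * q = c • q) : ∃ w : A, ∀ x, p * x * q ∈ ℂ ∙ w := by
  by_cases h : ∀ x, p * x * q = 0
  · exact ⟨0, fun x => by simp [h x]⟩
  obtain ⟨x₀, hw0⟩ := not_forall.mp h
  set w := p * x₀ * q
  refine ⟨w, fun x => ?_⟩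
  obtain ⟨c₁, hc₁⟩ := hqA (star x₀ * p * x₀)
  obtain ⟨c₂, hc₂⟩ := hpA (x * q * star x₀)
  have hww : star w * w = c₁ • q := by
    rw [← hc₁]
    simp only [w, star_mul, hp.isSelfAdjoint.star_eq, hq.isSelfAdjoint.star_eq, mul_assoc]
    rw [← mul_assoc p p, hp.isIdempotentElem.eq]
  have hyw : p * x * q * star w = c₂ • p := by
    rw [← hc₂]
    simp only [w, star_mul, hp.isSelfAdjoint.star_eq, hq.isSelfAdjoint.star_eq, mul_assoc]
    rw [← mul_assoc q q, hq.isIdempotentElem.eq]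
  have hc₁0 : c₁ ≠ 0 := fun h =>
    hw0 ((CStarRing.star_mul_self_eq_zero_iff w).mp (by rw [hww, h, zero_smul]))
  have key : c₁ • (p * x * q) = c₂ • w := calc
    c₁ • (p * x * q) = p * x * q * (c₁ • q) := by
      rw [mul_smul_comm, mul_assoc _ q q, hq.isIdempotentElem.eq]
    _ = c₂ • (p * w) := by rw [← hww, ← mul_assoc, hyw, smul_mul_assoc]
    _ = c₂ • w := by simp only [w, ← mul_assoc, hp.isIdempotentElem.eq]
  refine Submodule.mem_span_singleton.mpr ⟨c₁⁻¹ * c₂, ?_⟩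
  rw [mul_smul, ← key, smul_smul, inv_mul_cancel₀ hc₁0, one_smul]

theorem NonUnitalCStarAlgebra.finiteDimensional_of_orthogonalFamiliesCardLE
    (hA : OrthogonalFamiliesCardLE A N) : FiniteDimensional ℂ A := by
  classical
  obtain ⟨F, hF⟩ := exists_isMaxOrthogonalProjections hA
  have hcorner (pq : A × A) (h : pq ∈ F ×ˢ F) : ∃ w : A, ∀ x, pq.1 * x * pq.2 ∈ ℂ ∙ w := by
    obtain ⟨hp, hq⟩ := Finset.mem_product.mp h
    exact (hF.1.1 _ hp).1.exists_mul_mul_mem_span_singleton (hF.1.1 _ hq).1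
      (hF.exists_mul_mul_eq_smul hA hp) (hF.exists_mul_mul_eq_smul hA hq)
  choose! w hw using hcorner
  refine Module.finite_def.mpr ⟨(F ×ˢ F).image w, eq_top_iff.mpr fun x _ => ?_⟩
  rw [← hF.mul_sum_eq_self hA x, ← hF.sum_mul_eq_self hA x, Finset.sum_mul, Finset.sum_mul]
  refine Submodule.sum_mem _ fun p hp => ?_
  rw [Finset.mul_sum]
  refine Submodule.sum_mem _ fun q hq => ?_
  have hpq : (p, q) ∈ F ×ˢ F := Finset.mem_product.mpr ⟨hp, hq⟩
  exact Submodule.span_mono (by simpa using Finset.mem_image_of_mem w hpq) (hw (p, q) hpq x)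

end CStarAlgebra

lemma orthogonalFamiliesCardLE_of_norm_le_mul_norm_apply {H : Type*} [NormedAddCommGroup H]
    [InnerProductSpace ℂ H] [CompleteSpace H] {B : NonUnitalStarSubalgebra ℂ (H →L[ℂ] H)}
    {ξ : H} {R : ℝ} (hbound : ∀ a ∈ B, ‖a‖ ≤ R * ‖a ξ‖) :
    OrthogonalFamiliesCardLE B ⌈R ^ 2 * ‖ξ‖ ^ 2⌉₊ := by
  intro n x hx horth
  have hsum := sum_norm_apply_sq_le (x := fun i => (x i : H →L[ℂ] H))
    (fun i => congr($((hx i).1).val)) (fun i => (hx i).2.le)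
    (fun i j hij => congr($(horth hij).val)) ξ
  have hone (i : Fin n) : 1 ≤ (R * ‖(x i : H →L[ℂ] H) ξ‖) ^ 2 :=
    one_le_pow₀ ((hx i).2.symm.le.trans (hbound _ (x i).2))
  have : (n : ℝ) ≤ R ^ 2 * ‖ξ‖ ^ 2 := calc
    (n : ℝ) = ∑ _i : Fin n, (1 : ℝ) := by simp
    _ ≤ ∑ i, (R * ‖(x i : H →L[ℂ] H) ξ‖) ^ 2 := Finset.sum_le_sum fun i _ => hone i
    _ = R ^ 2 * ∑ i, ‖(x i : H →L[ℂ] H) ξ‖ ^ 2 := by simp only [mul_pow, Finset.mul_sum]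
    _ ≤ R ^ 2 * ‖ξ‖ ^ 2 := by gcongr
  exact_mod_cast this.trans (Nat.le_ceil _)

theorem finiteDimensional_of_norm_le_vector_norm_general
    {H : Type} [NormedAddCommGroup H] [InnerProductSpace ℂ H] [CompleteSpace H]
    (B : NonUnitalStarSubalgebra ℂ (H →L[ℂ] H)) (hB_closed : IsClosed (B : Set (H →L[ℂ] H)))
    (ξ : H) (R : ℝ)
    (hbound : ∀ a ∈ B, ‖a‖ ≤ R * ‖a ξ‖) :
    FiniteDimensional ℂ ↥B :=
  NonUnitalCStarAlgebra.finiteDimensional_of_orthogonalFamiliesCardLE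
    (orthogonalFamiliesCardLE_of_norm_le_mul_norm_apply hbound)

/-- If `B` is a C*-subalgebra (a norm-closed star-subalgebra) of `B(H)` and `ξ ∈ H`,
`R > 0` are such that `‖a‖ ≤ R ‖a ξ‖` for all `a ∈ B`, then `B` is finite-dimensional
over `ℂ`. -/
theorem finiteDimensional_of_norm_le_vector_norm
    {H : Type} [NormedAddCommGroup H] [InnerProductSpace ℂ H] [CompleteSpace H]
    (B : NonUnitalStarSubalgebra ℂ (H →L[ℂ] H)) (hB_closed : IsClosed (B : Set (H →L[ℂ] H)))
    (ξ : H) (R : ℝ) (hR : 0 < R)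
    (hbound : ∀ a ∈ B, ‖a‖ ≤ R * ‖a ξ‖) :
    FiniteDimensional ℂ ↥B :=
  finiteDimensional_of_norm_le_vector_norm_general B hB_closed ξ R hbound
end

section
/- Let B be a unital C*-algebra and h ∈ B a positive element such that 0 lies in the spectrum of h and 0 is not an isolated point of the spectrum of h. Then there exists a sequence (f_j) of positive elements of B with ‖f_j‖ = 1 for all j, f_j f_k = 0 whenever j ≠ k, and ‖h f_j‖ → 0 as j → ∞. -/
/-!
Pick nonzero points `δ₀ > δ₁ > ⋯` of the spectrum of `h`, each less than half the previous one,
and let `f j` be the functional calculus of `h` applied to a tent of height `1` at `δ j` supported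
in `(3 δ j / 4, 5 δ j / 4)`. These supports are pairwise disjoint, so the `f j` are orthogonal;
the functional calculus is isometric, so `‖f j‖ = 1` and `‖h f j‖ ≤ 5 δ j / 4 → 0`.
-/

open Filter Topology

noncomputable def tent (c r x : ℝ) : ℝ := max 0 (1 - |x - c| / r)

namespace tent

variable {c r : ℝ}

@[fun_prop]
lemma continuous (c r : ℝ) : Continuous (tent c r) := by
  unfold tent; fun_prop

lemma nonneg (c r x : ℝ) : 0 ≤ tent c r x := le_max_left _ _

lemma norm_le_one (hr : 0 ≤ r) (x : ℝ) : ‖tent c r x‖ ≤ 1 := by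
  rw [Real.norm_of_nonneg (nonneg c r x)]
  exact max_le zero_le_one (by linarith [div_nonneg (abs_nonneg (x - c)) hr])

@[simp]
lemma self (c r : ℝ) : tent c r c = 1 := by simp [tent]

lemma abs_sub_lt_of_ne_zero (hr : 0 < r) {x : ℝ} (hx : tent c r x ≠ 0) : |x - c| < r := by
  by_contra! hle
  exact hx (max_eq_left (by rw [sub_nonpos, one_le_div hr]; exact hle))

end tent

lemma tent_mul_tent_eq_zero {c d : ℝ} (hd : 0 < d) (hdc : d < c / 2) (x : ℝ) :
    tent c (c / 4) x * tent d (d / 4) x = 0 := by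
  by_contra hx
  have hxc := tent.abs_sub_lt_of_ne_zero (by linarith) (left_ne_zero_of_mul hx)
  have hxd := tent.abs_sub_lt_of_ne_zero (by linarith) (right_ne_zero_of_mul hx)
  rw [abs_sub_lt_iff] at hxc hxd
  linarith

lemma exists_seq_pos_lt_half {S : Set ℝ} (hS : ∀ ε > 0, ∃ x ∈ S, 0 < x ∧ x < ε) :
    ∃ δ : ℕ → ℝ, (∀ n, δ n ∈ S ∧ 0 < δ n) ∧ ∀ n, δ (n + 1) < δ n / 2 := by
  choose next hnext using fun r : {r : ℝ // 0 < r} => hS (r / 2) (half_pos r.2)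
  let step (r : {r : ℝ // 0 < r}) : {r : ℝ // 0 < r} := ⟨next r, (hnext r).2.1⟩
  refine ⟨fun n => step^[n + 1] ⟨1, one_pos⟩, fun n => ?_, fun n => ?_⟩
  · beta_reduce
    rw [Function.iterate_succ_apply']
    exact ⟨(hnext _).1, (hnext _).2.1⟩
  · beta_reduce
    rw [Function.iterate_succ_apply' _ (n + 1)]
    exact (hnext _).2.2

section HalvingSequence

variable {δ : ℕ → ℝ} (hpos : ∀ n, 0 < δ n) (hhalf : ∀ n, δ (n + 1) < δ n / 2)
include hpos hhalf

lemma lt_half_of_lt {j k : ℕ} (hjk : j < k) : δ k < δ j / 2 := by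
  induction k, hjk using Nat.le_induction with
  | base => exact hhalf j
  | succ k _ ih => linarith [hhalf k, hpos k]

lemma tendsto_zero_of_lt_half : Tendsto δ atTop (𝓝 0) := by
  have hgeom : ∀ n, δ n ≤ δ 0 * (1 / 2) ^ n := by
    intro n
    induction n with
    | zero => simp
    | succ n ih => rw [pow_succ]; linarith [hhalf n]
  refine squeeze_zero (fun n => (hpos n).le) hgeom ?_
  simpa using (tendsto_pow_atTop_nhds_zero_of_lt_one (by norm_num : (0 : ℝ) ≤ 1 / 2)
    (by norm_num)).const_mul (δ 0)

end HalvingSequence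

section CStarAlgebra

variable {A : Type*} [CStarAlgebra A] {a : A} {g k : ℝ → ℝ}

lemma exists_mem_spectrum_real_pos_lt [PartialOrder A] [StarOrderedRing A] (ha : 0 ≤ a)
    (h0 : ∀ ε > (0 : ℝ), ∃ z ∈ spectrum ℂ a, z ≠ 0 ∧ ‖z‖ < ε) :
    ∀ ε > 0, ∃ x ∈ spectrum ℝ a, 0 < x ∧ x < ε := by
  intro ε hε
  obtain ⟨z, hz, hz0, hzε⟩ := h0 ε hε
  have hz_re : z = z.re := ha.isSelfAdjoint.mem_spectrum_eq_re hz
  have hre_mem : z.re ∈ spectrum ℝ a := (spectrum.algebraMap_mem_iff ℂ).mp (hz_re ▸ hz)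
  refine ⟨z.re, hre_mem, ?_, (Complex.re_le_norm z).trans_lt hzε⟩
  refine (spectrum_nonneg_of_nonneg ha hre_mem).lt_of_ne fun h => hz0 ?_
  rw [hz_re, ← h, Complex.ofReal_zero]

lemma exists_eq_star_mul_self_cfc [PartialOrder A] [StarOrderedRing A]
    (hg : ∀ x ∈ spectrum ℝ a, 0 ≤ g x) : ∃ b : A, cfc g a = star b * b :=
  CStarAlgebra.nonneg_iff_eq_star_mul_self.mp (cfc_nonneg hg)

lemma norm_cfc_eq_one (ha : IsSelfAdjoint a) (hg : ContinuousOn g (spectrum ℝ a))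
    (hg_le : ∀ x ∈ spectrum ℝ a, ‖g x‖ ≤ 1) {r : ℝ} (hr : r ∈ spectrum ℝ a) (hgr : g r = 1) :
    ‖cfc g a‖ = 1 :=
  le_antisymm (norm_cfc_le zero_le_one hg_le)
    (by simpa [hgr] using norm_apply_le_norm_cfc g a hr)

lemma cfc_mul_cfc_eq_zero (hg : ContinuousOn g (spectrum ℝ a))
    (hk : ContinuousOn k (spectrum ℝ a)) (hgk : ∀ x ∈ spectrum ℝ a, g x * k x = 0) :
    cfc g a * cfc k a = 0 := by
  rw [← cfc_mul g k a, cfc_congr hgk, cfc_const_zero]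

lemma norm_mul_cfc_le (ha : IsSelfAdjoint a) (hg : ContinuousOn g (spectrum ℝ a))
    (hg_le : ∀ x ∈ spectrum ℝ a, ‖g x‖ ≤ 1) {C : ℝ} (hC : 0 ≤ C)
    (hsupp : ∀ x ∈ spectrum ℝ a, g x ≠ 0 → |x| ≤ C) : ‖a * cfc g a‖ ≤ C := by
  conv_lhs => enter [1, 1]; rw [← cfc_id' ℝ a]
  rw [← cfc_mul (fun x => x) g a]
  refine norm_cfc_le hC fun x hx => ?_
  rw [norm_mul, Real.norm_eq_abs]
  by_cases hgx : g x = 0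
  · simp [hgx, hC]
  · simpa using mul_le_mul (hsupp x hx hgx) (hg_le x hx) (norm_nonneg _) hC

end CStarAlgebra

theorem exists_orthogonal_sequence_of_not_isolated_zero_general
    {B : Type} [NormedRing B] [StarRing B] [CStarRing B]
    [NormedAlgebra ℂ B] [CompleteSpace B] [StarModule ℂ B]
    (h : B) (hh_pos : ∃ c : B, h = star c * c)
    (h0_not_isolated : ∀ ε > (0 : ℝ), ∃ z ∈ spectrum ℂ h, z ≠ 0 ∧ ‖z‖ < ε) :
    ∃ f : ℕ → B, (∀ j, ∃ c : B, f j = star c * c) ∧ (∀ j, ‖f j‖ = 1) ∧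
      (∀ j k, j ≠ k → f j * f k = 0) ∧
      Filter.Tendsto (fun j => ‖h * f j‖) Filter.atTop (nhds 0) := by
  let : CStarAlgebra B :=
    { ‹NormedRing B›, ‹StarRing B›, ‹CompleteSpace B›, ‹CStarRing B›,
      ‹NormedAlgebra ℂ B›, ‹StarModule ℂ B› with }
  let := CStarAlgebra.spectralOrder B
  let := CStarAlgebra.spectralOrderedRing B
  have h_nonneg : 0 ≤ h := CStarAlgebra.nonneg_iff_eq_star_mul_self.mpr hh_pos
  have hsa := h_nonneg.isSelfAdjoint
  obtain ⟨δ, hδ, hhalf⟩ :=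
    exists_seq_pos_lt_half (exists_mem_spectrum_real_pos_lt h_nonneg h0_not_isolated)
  have hpos j : 0 < δ j := (hδ j).2
  have tent_le j x : ‖tent (δ j) (δ j / 4) x‖ ≤ 1 := tent.norm_le_one (by linarith [hpos j]) x
  refine ⟨fun j => cfc (tent (δ j) (δ j / 4)) h,
    fun j => exists_eq_star_mul_self_cfc fun x _ => tent.nonneg _ _ x,
    fun j => norm_cfc_eq_one hsa (by fun_prop) (fun x _ => tent_le j x) (hδ j).1 (tent.self _ _),
    fun j k hjk => cfc_mul_cfc_eq_zero (by fun_prop) (by fun_prop) fun x _ => ?_, ?_⟩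
  · rcases hjk.lt_or_gt with hjk | hkj
    · exact tent_mul_tent_eq_zero (hpos k) (lt_half_of_lt hpos hhalf hjk) x
    · rw [mul_comm]
      exact tent_mul_tent_eq_zero (hpos j) (lt_half_of_lt hpos hhalf hkj) x
  · have hbound j : ‖h * cfc (tent (δ j) (δ j / 4)) h‖ ≤ 5 / 4 * δ j := by
      refine norm_mul_cfc_le hsa (by fun_prop) (fun x _ => tent_le j x) (by linarith [hpos j])
        fun x _ hx => ?_
      have := abs_sub_lt_iff.mp (tent.abs_sub_lt_of_ne_zero (by linarith [hpos j]) hx)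
      exact abs_le.mpr ⟨by linarith [hpos j], by linarith⟩
    refine squeeze_zero (fun _ => norm_nonneg _) hbound ?_
    simpa using (tendsto_zero_of_lt_half hpos hhalf).const_mul (5 / 4 : ℝ)

/-- If `h` is a positive element of a unital C*-algebra `B` such that `0` lies in the
spectrum of `h` and is not an isolated point of it, then there is a sequence `(f j)` of
positive norm-one elements of `B` which are pairwise orthogonal and satisfy
`‖h * f j‖ → 0`. -/
theorem exists_orthogonal_sequence_of_not_isolated_zero
    {B : Type} [NormedRing B] [StarRing B] [CStarRing B]
    [NormedAlgebra ℂ B] [CompleteSpace B] [StarModule ℂ B]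
    (h : B) (hh_pos : ∃ c : B, h = star c * c)
    (h0_mem : (0 : ℂ) ∈ spectrum ℂ h)
    (h0_not_isolated : ∀ ε > (0 : ℝ), ∃ z ∈ spectrum ℂ h, z ≠ 0 ∧ ‖z‖ < ε) :
    ∃ f : ℕ → B, (∀ j, ∃ c : B, f j = star c * c) ∧ (∀ j, ‖f j‖ = 1) ∧
      (∀ j k, j ≠ k → f j * f k = 0) ∧
      Filter.Tendsto (fun j => ‖h * f j‖) Filter.atTop (nhds 0) :=
  exists_orthogonal_sequence_of_not_isolated_zero_general h hh_pos h0_not_isolated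
end

section
/- Let B be a unital C*-algebra, φ a state on B, H a complex Hilbert space, π : B → B(H) a unital star-algebra homomorphism, and ξ ∈ H a unit vector cyclic for π (π(B)ξ dense in H) with φ(x) = ⟨π(x)ξ, ξ⟩ for all x ∈ B. Let M denote the double commutant of π(B) inside B(H). Suppose there exists a unitary u ∈ M such that ⟨u^k ξ, ξ⟩ = 0 for every integer k ≠ 0 and ⟨u* T u ξ, ξ⟩ = ⟨T ξ, ξ⟩ for every T ∈ M. Then for every finite subset F of B and every ε > 0 there exists b ∈ B with |φ(b b*) − 1| < ε, |φ(x b)| < ε and |φ(b* x b) − φ(x)| < ε for all x ∈ F. (Equivalently, there is a net (b_i) in B with lim_i φ(b_i b_i*) = 1, lim_i φ(b_i* x b_i) = φ(x) and lim_i φ(x b_i) = 0 for every x ∈ B.) -/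
/-!
The orbit `n ↦ uⁿξ` is orthonormal because `⟪ξ, uᵏξ⟫ = 0` for `k ≠ 0`, so by Bessel's
inequality `⟪η, uⁿξ⟫ → 0` for every `η`; fix `n` with `⟪π(x*)ξ, uⁿξ⟫` small for all `x ∈ F`.
As `uⁿ` lies in the bicommutant of `π(B)`, the strong* form of von Neumann's density theorem
gives `b ∈ B` with `π(b)ξ ≈ uⁿξ` and `π(b*)ξ ≈ u*ⁿξ`. Then `φ(bb*) = ‖π(b*)ξ‖² ≈ 1`,
`φ(xb) = ⟪π(x*)ξ, π(b)ξ⟫ ≈ 0`, and `φ(b*xb) = ⟪π(b)ξ, π(x)π(b)ξ⟫ ≈ ⟪uⁿξ, π(x)uⁿξ⟫ = φ(x)`,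
the last equality by the invariance of the vector state of `ξ` under conjugation by `u`.

The density theorem is the classical one: the projection onto the closure of `π(B)ζ` commutes
with `π(B)`, hence with the bicommutant, applied to `ζ` in a direct sum of copies of `H`.
Its strong* form follows by real orthogonality in `H ⊕ H`, where the pairs `(aξ, a*ξ)` span
only a real subspace.
-/

open scoped InnerProductSpace Topology
open Filter

section Density

variable {𝕜 E : Type*} [RCLike 𝕜] [NormedAddCommGroup E] [InnerProductSpace 𝕜 E] [CompleteSpace E]

open ContinuousLinearMap Module.End in
theorem Submodule.commute_starProjection_of_mem_invtSubmodule {K : Submodule 𝕜 E}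
    [K.HasOrthogonalProjection] {T : E →L[𝕜] E} (hT : K ∈ invtSubmodule T)
    (hT' : K ∈ invtSubmodule (adjoint T)) :
    Commute K.starProjection T := by
  rw [IsIdempotentElem.commute_iff K.isIdempotentElem_starProjection, range_starProjection,
    ker_starProjection]
  exact ⟨hT, orthogonal_mem_invtSubmodule hT'⟩

theorem apply_mem_closure_image_of_mem_centralizer_centralizer
    (A : StarSubalgebra 𝕜 (E →L[𝕜] E)) {T : E →L[𝕜] E}
    (hT : T ∈ Set.centralizer (Set.centralizer (A : Set (E →L[𝕜] E)))) (ζ : E) :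
    T ζ ∈ closure ((fun a : E →L[𝕜] E => a ζ) '' A) := by
  let W := (A.toSubalgebra.toSubmodule.map
    (ContinuousLinearMap.apply 𝕜 E ζ).toLinearMap).topologicalClosure
  have hinv : ∀ a ∈ A, W ∈ Module.End.invtSubmodule a := by
    refine fun a ha => Submodule.topologicalClosure_mem_invtSubmodule ?_
    rw [Module.End.mem_invtSubmodule_iff_forall_mem_of_mem]
    rintro _ ⟨b, hb, rfl⟩
    exact ⟨a * b, A.mul_mem ha hb, rfl⟩
  have hP : W.starProjection ∈ Set.centralizer (A : Set (E →L[𝕜] E)) := fun a ha =>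
    (W.commute_starProjection_of_mem_invtSubmodule (hinv a ha)
      (by rw [← ContinuousLinearMap.star_eq_adjoint]; exact hinv _ (star_mem ha))).eq.symm
  have hζ : ζ ∈ W := Submodule.le_topologicalClosure _ ⟨1, A.one_mem, rfl⟩
  have hW : (W : Set E) = closure ((fun a : E →L[𝕜] E => a ζ) '' A) :=
    Submodule.topologicalClosure_coe _
  rw [← hW, ← Submodule.starProjection_eq_self_iff.mpr hζ, ← mul_apply_eq_comp, ← hT _ hP]
  exact W.starProjection_apply_mem _

variable (𝕜 E) (ι : Type*) [Fintype ι]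

/-- `X ↦ X ⊗ 1`, acting diagonally on the `ℓ²`-sum of `ι` copies of `E`. -/
def ampliation : (E →L[𝕜] E) →⋆ₐ[𝕜] (PiLp 2 (fun _ : ι => E) →L[𝕜] PiLp 2 (fun _ : ι => E)) where
  toFun X := (PiLp.continuousLinearEquiv 2 𝕜 _).symm.toContinuousLinearMap ∘L
    ContinuousLinearMap.piMap (fun _ => X) ∘L
      (PiLp.continuousLinearEquiv 2 𝕜 _).toContinuousLinearMap
  map_one' := rfl
  map_mul' _ _ := rfl
  map_zero' := rfl
  map_add' _ _ := rfl
  commutes' _ := rfl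
  map_star' X := by
    simp only [ContinuousLinearMap.star_eq_adjoint]
    refine (ContinuousLinearMap.eq_adjoint_iff _ _).mpr fun v w => ?_
    simp only [PiLp.inner_apply]
    exact Finset.sum_congr rfl fun i _ => ContinuousLinearMap.adjoint_inner_left _ _ _

variable {𝕜 E ι}

@[simp]
theorem ampliation_apply (X : E →L[𝕜] E) (v : PiLp 2 (fun _ : ι => E)) (i : ι) :
    ampliation 𝕜 E ι X v i = X (v i) := rfl

theorem ampliation_single [DecidableEq ι] (X : E →L[𝕜] E) (j : ι) (x : E) :
    ampliation 𝕜 E ι X (PiLp.single 2 j x) = PiLp.single 2 j (X x) :=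
  PiLp.ext fun i => Pi.apply_single (fun _ => X) (fun _ => map_zero X) j x i

/-- The commutant of an ampliation consists of the `ι × ι` matrices with entries in the
commutant, so the ampliation of an element of the bicommutant lies in the bicommutant. -/
theorem ampliation_mem_centralizer_centralizer {S : Set (E →L[𝕜] E)} {T : E →L[𝕜] E}
    (hT : T ∈ Set.centralizer (Set.centralizer S)) :
    ampliation 𝕜 E ι T ∈ Set.centralizer (Set.centralizer (ampliation 𝕜 E ι '' S)) := by
  classical
  intro Y hY
  let entry (i j : ι) : E →L[𝕜] E := PiLp.proj 2 (fun _ : ι => E) i ∘L Y ∘L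
    (PiLp.continuousLinearEquiv 2 𝕜 _).symm.toContinuousLinearMap ∘L
      ContinuousLinearMap.single 𝕜 (fun _ => E) j
  have hentry : ∀ i j, entry i j ∈ Set.centralizer S := by
    rintro i j X hX
    ext x
    simpa [entry, ampliation_single] using congr($(hY _ ⟨X, hX, rfl⟩) (PiLp.single 2 j x) i)
  have hY_apply : ∀ v i, Y v i = ∑ j, entry i j (v j) := by
    intro v i
    conv_lhs => rw [← show ∑ j, PiLp.single 2 j (v j) = v by ext; simp]
    simp [entry]
  ext v i
  rw [mul_apply_eq_comp, mul_apply_eq_comp, hY_apply, ampliation_apply, hY_apply, map_sum]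
  exact Finset.sum_congr rfl fun j _ => congr($(hT _ (hentry i j)) (v j))

theorem ampliation_apply_mem_closure_image_of_mem_centralizer_centralizer
    (A : StarSubalgebra 𝕜 (E →L[𝕜] E)) {T : E →L[𝕜] E}
    (hT : T ∈ Set.centralizer (Set.centralizer (A : Set (E →L[𝕜] E))))
    (ζ : PiLp 2 (fun _ : ι => E)) :
    ampliation 𝕜 E ι T ζ ∈ closure ((fun a : E →L[𝕜] E => ampliation 𝕜 E ι a ζ) '' A) := by
  have := apply_mem_closure_image_of_mem_centralizer_centralizer (A.map (ampliation 𝕜 E ι))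
    (by rw [StarSubalgebra.coe_map]; exact ampliation_mem_centralizer_centralizer hT) ζ
  rwa [StarSubalgebra.coe_map, Set.image_image] at this

theorem inner_add_inner_eq_zero_of_mem_centralizer_centralizer
    (A : StarSubalgebra 𝕜 (E →L[𝕜] E)) {T : E →L[𝕜] E}
    (hT : T ∈ Set.centralizer (Set.centralizer (A : Set (E →L[𝕜] E)))) {x y ζ η : E}
    (h : ∀ a ∈ A, ⟪x, a ζ⟫_𝕜 + ⟪y, a η⟫_𝕜 = 0) :
    ⟪x, T ζ⟫_𝕜 + ⟪y, T η⟫_𝕜 = 0 := by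
  have hinner : ∀ a : E →L[𝕜] E, ⟪x, a ζ⟫_𝕜 + ⟪y, a η⟫_𝕜 =
      ⟪WithLp.toLp 2 ![x, y], ampliation 𝕜 E (Fin 2) a (WithLp.toLp 2 ![ζ, η])⟫_𝕜 := by
    simp [PiLp.inner_apply, Fin.sum_univ_two]
  rw [hinner]
  refine closure_minimal ?_ (isClosed_eq (by fun_prop) continuous_const)
    (ampliation_apply_mem_closure_image_of_mem_centralizer_centralizer A hT _)
  rintro _ ⟨a, ha, rfl⟩
  exact (hinner a).symm.trans (h a ha)

end Density

section StrongStarDensity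

variable {H : Type*} [NormedAddCommGroup H] [InnerProductSpace ℂ H] [CompleteSpace H]

theorem mem_closure_image_apply_star_apply_of_mem_centralizer_centralizer
    (A : StarSubalgebra ℂ (H →L[ℂ] H)) {T : H →L[ℂ] H}
    (hT : T ∈ Set.centralizer (Set.centralizer (A : Set (H →L[ℂ] H)))) (ξ : H) :
    (T ξ, star T ξ) ∈ closure ((fun a : H →L[ℂ] H => (a ξ, star a ξ)) '' A) := by
  let K := PiLp 2 (fun _ : Fin 2 => H)
  let _ : InnerProductSpace ℝ K := InnerProductSpace.rclikeToReal ℂ K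
  let L : (H →L[ℂ] H) →ₗ[ℝ] K :=
    { toFun a := WithLp.toLp 2 ![a ξ, star a ξ]
      map_add' a b := by rw [star_add]; ext i; fin_cases i <;> rfl
      map_smul' r a := by rw [star_smul, star_trivial]; ext i; fin_cases i <;> rfl }
  let C := (A.toSubalgebra.toSubmodule.restrictScalars ℝ).map L
  have hre : ∀ (a : H →L[ℂ] H) (z : K),
      ⟪L a, z⟫_ℝ = (⟪z 0, a ξ⟫_ℂ + ⟪ξ, a (z 1)⟫_ℂ).re := by
    intro a z
    rw [real_inner_eq_re_inner ℂ, PiLp.inner_apply, Fin.sum_univ_two]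
    simp [L, ContinuousLinearMap.star_eq_adjoint, ContinuousLinearMap.adjoint_inner_left]
    exact inner_re_symm (𝕜 := ℂ) _ _
  -- The real part at `I • a` is minus the imaginary part at `a`.
  have hvanish : ∀ z : K, z ∈ Cᗮ → ⟪z 0, T ξ⟫_ℂ + ⟪ξ, T (z 1)⟫_ℂ = 0 := by
    intro z hz
    have hre_A : ∀ a ∈ A, (⟪z 0, a ξ⟫_ℂ + ⟪ξ, a (z 1)⟫_ℂ).re = 0 := fun a ha =>
      (hre a z).symm.trans ((Submodule.mem_orthogonal C z).mp hz _ ⟨a, ha, rfl⟩)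
    refine inner_add_inner_eq_zero_of_mem_centralizer_centralizer A hT fun a ha => ?_
    have h_I := hre_A (Complex.I • a) (A.smul_mem ha _)
    simp only [smul_apply, inner_smul_right, ← mul_add, Complex.mul_re, Complex.I_re,
      Complex.I_im, zero_mul, one_mul, zero_sub, neg_eq_zero] at h_I
    exact Complex.ext (hre_A a ha) h_I
  have hLT : L T ∈ C.topologicalClosure := by
    rw [← Submodule.orthogonal_orthogonal_eq_closure, Submodule.mem_orthogonal]
    intro z hz
    rw [real_inner_comm, hre, hvanish z hz, Complex.zero_re]
  rw [← SetLike.mem_coe, Submodule.topologicalClosure_coe, Submodule.map_coe] at hLT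
  refine map_mem_closure (f := fun v : PiLp 2 (fun _ : Fin 2 => H) => (v 0, v 1))
    (by fun_prop) hLT ?_
  rintro _ ⟨a, ha, rfl⟩
  exact ⟨a, ha, rfl⟩

end StrongStarDensity

section Orbit

variable {𝕜 E : Type*} [RCLike 𝕜] [NormedAddCommGroup E] [InnerProductSpace 𝕜 E] [CompleteSpace E]

theorem ContinuousLinearMap.inner_star_mul_apply (a c : E →L[𝕜] E) (x y : E) :
    ⟪x, (star a * c) y⟫_𝕜 = ⟪a x, c y⟫_𝕜 := by
  rw [mul_apply_eq_comp, star_eq_adjoint, adjoint_inner_right]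

theorem orthonormal_pow_apply {u : E →L[𝕜] E} (hu : star u * u = 1) {ξ : E} (hξ : ‖ξ‖ = 1)
    (h : ∀ k : ℕ, k ≠ 0 → ⟪ξ, (u ^ k) ξ⟫_𝕜 = 0) :
    Orthonormal 𝕜 fun n : ℕ => (u ^ n) ξ := by
  have hiso : ∀ m x y, ⟪(u ^ m) x, (u ^ m) y⟫_𝕜 = ⟪x, y⟫_𝕜 := by
    intro m
    induction m with
    | zero => simp
    | succ m ih =>
      intro x y
      rw [pow_succ, mul_apply_eq_comp, mul_apply_eq_comp, ih,
        ← ContinuousLinearMap.inner_star_mul_apply, hu, one_apply_eq_self]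
  have hshift : ∀ m k, ⟪(u ^ m) ξ, (u ^ (m + k)) ξ⟫_𝕜 = if k = 0 then 1 else 0 := by
    intro m k
    rw [pow_add, mul_apply_eq_comp, hiso]
    split_ifs with hk
    · simp [hk, hξ]
    · exact h k hk
  rw [orthonormal_iff_ite]
  intro m n
  rcases le_total m n with hmn | hnm
  · obtain ⟨k, rfl⟩ := Nat.exists_eq_add_of_le hmn
    rw [hshift]
    simp
  · obtain ⟨k, rfl⟩ := Nat.exists_eq_add_of_le hnm
    rw [← inner_conj_symm, hshift]
    split_ifs <;> simp_all

omit [CompleteSpace E] in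
theorem Orthonormal.tendsto_inner_atTop_zero {v : ℕ → E} (hv : Orthonormal 𝕜 v) (x : E) :
    Tendsto (fun n => ⟪x, v n⟫_𝕜) atTop (𝓝 0) := by
  rw [tendsto_zero_iff_norm_tendsto_zero]
  simpa [Real.sqrt_sq (norm_nonneg _), norm_inner_symm] using
    (hv.inner_products_summable x).tendsto_atTop_zero.sqrt

theorem inner_pow_apply_eq_of_forall_inner_conj_eq {u : E →L[𝕜] E} {M : Set (E →L[𝕜] E)} {ξ : E}
    (hM : ∀ T ∈ M, star u * T * u ∈ M) (hfix : ∀ T ∈ M, ⟪ξ, (star u * T * u) ξ⟫_𝕜 = ⟪ξ, T ξ⟫_𝕜)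
    (n : ℕ) {T : E →L[𝕜] E} (hT : T ∈ M) :
    ⟪(u ^ n) ξ, T ((u ^ n) ξ)⟫_𝕜 = ⟪ξ, T ξ⟫_𝕜 := by
  induction n generalizing T with
  | zero => simp
  | succ n ih =>
    calc ⟪(u ^ (n + 1)) ξ, T ((u ^ (n + 1)) ξ)⟫_𝕜
        = ⟪(u ^ n) ξ, (star u * T * u) ((u ^ n) ξ)⟫_𝕜 := by
          rw [mul_assoc, ContinuousLinearMap.inner_star_mul_apply, pow_succ']; rfl
      _ = ⟪ξ, (star u * T * u) ξ⟫_𝕜 := ih (hM T hT)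
      _ = ⟪ξ, T ξ⟫_𝕜 := hfix T hT

end Orbit

theorem exists_state_approx_of_mem_closure {B H : Type*} [Ring B] [StarRing B] [Algebra ℂ B]
    [NormedAddCommGroup H] [InnerProductSpace ℂ H] [CompleteSpace H] (φ : B →ₗ[ℂ] ℂ)
    (π : B →⋆ₐ[ℂ] (H →L[ℂ] H)) (ξ : H) (hφ : ∀ x : B, φ x = ⟪ξ, π x ξ⟫_ℂ) (F : Finset B)
    {ε : ℝ} (hε : 0 < ε) {v w : H}
    (hvw : (v, w) ∈ closure ((fun a : H →L[ℂ] H => (a ξ, star a ξ)) '' π.range))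
    (hw : ‖w‖ = 1) (hv : ∀ x ∈ F, ‖⟪π (star x) ξ, v⟫_ℂ‖ < ε)
    (hv_state : ∀ x ∈ F, ⟪v, π x v⟫_ℂ = φ x) :
    ∃ b : B, ‖φ (b * star b) - 1‖ < ε ∧
      ∀ x ∈ F, ‖φ (x * b)‖ < ε ∧ ‖φ (star b * x * b) - φ x‖ < ε := by
  have hφ_star_mul : ∀ a c : B, φ (star a * c) = ⟪π a ξ, π c ξ⟫_ℂ := fun a c => by
    rw [hφ, map_mul, map_star, ContinuousLinearMap.inner_star_mul_apply]
  have hlt : ∀ f : H × H → ℝ, Continuous f → f (v, w) < ε → ∀ᶠ p in 𝓝 (v, w), f p < ε :=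
    fun f hf h => (hf.tendsto _).eventually_lt_const h
  have hev : ∀ᶠ p in 𝓝 (v, w), ‖⟪p.2, p.2⟫_ℂ - 1‖ < ε ∧
      ∀ x ∈ F, ‖⟪π (star x) ξ, p.1⟫_ℂ‖ < ε ∧ ‖⟪p.1, π x p.1⟫_ℂ - φ x‖ < ε :=
    (hlt _ (by fun_prop) (by simpa [hw] using hε)).and ((eventually_all_finset F).2 fun x hx =>
      (hlt _ (by fun_prop) (hv x hx)).and (hlt _ (by fun_prop) (by simpa [hv_state x hx] using hε)))
  obtain ⟨_, ⟨_, ⟨b, rfl⟩, rfl⟩, hb_norm, hb⟩ :=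
    ((mem_closure_iff_frequently.1 hvw).and_eventually hev).exists
  simp only [AlgHom.toRingHom_eq_coe, RingHom.coe_coe, StarAlgHom.coe_toAlgHom, ← map_star]
    at hb_norm hb
  refine ⟨b, ?_, fun x hx => ⟨?_, ?_⟩⟩
  · rwa [← star_star b, star_star (star b), hφ_star_mul]
  · rw [← star_star x, hφ_star_mul]
    exact (hb x hx).1
  · rw [mul_assoc, hφ_star_mul, map_mul]
    exact (hb x hx).2

theorem haar_unitary_approximation_general {B : Type} [NormedRing B] [StarRing B]
    [NormedAlgebra ℂ B]
    (φ : B →ₗ[ℂ] ℂ)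
    {H : Type} [NormedAddCommGroup H] [InnerProductSpace ℂ H] [CompleteSpace H]
    (π : B →⋆ₐ[ℂ] (H →L[ℂ] H))
    (ξ : H) (hξ : ‖ξ‖ = 1)
    (hφ : ∀ x : B, φ x = ⟪ξ, π x ξ⟫_ℂ)
    (M : Set (H →L[ℂ] H))
    (hM : M = Set.centralizer (Set.centralizer (Set.range fun b : B => π b)))
    (u : H →L[ℂ] H) (hu_mem : u ∈ M)
    (hu_unitary : u * star u = 1 ∧ star u * u = 1)
    (hu_haar : ∀ k : ℕ, k ≠ 0 → ⟪ξ, (u ^ k) ξ⟫_ℂ = 0 ∧ ⟪ξ, ((star u) ^ k) ξ⟫_ℂ = 0)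
    (hu_fix : ∀ T ∈ M, ⟪ξ, (star u * T * u) ξ⟫_ℂ = ⟪ξ, T ξ⟫_ℂ)
    (F : Finset B) (ε : ℝ) (hε : 0 < ε) :
    ∃ b : B, ‖φ (b * star b) - 1‖ < ε ∧
      ∀ x ∈ F, ‖φ (x * b)‖ < ε ∧ ‖φ (star b * x * b) - φ x‖ < ε := by
  let N := StarSubalgebra.centralizer ℂ
    (StarSubalgebra.centralizer ℂ (π.range : Set (H →L[ℂ] H)) : Set (H →L[ℂ] H))
  have hN : (N : Set (H →L[ℂ] H)) = Set.centralizer (Set.centralizer (π.range : Set _)) := by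
    rw [StarSubalgebra.coe_centralizer_centralizer, StarMemClass.star_coe_eq, Set.union_self]
  simp only [hM.trans hN.symm, SetLike.mem_coe] at hu_mem hu_fix
  have hu : u ∈ unitary (H →L[ℂ] H) := Unitary.mem_iff.2 ⟨hu_unitary.2, hu_unitary.1⟩
  obtain ⟨n, hn⟩ : ∃ n : ℕ, ∀ x ∈ F, ‖⟪π (star x) ξ, (u ^ n) ξ⟫_ℂ‖ < ε :=
    ((eventually_all_finset F).2 fun x _ =>
      ((orthonormal_pow_apply hu_unitary.2 hξ fun k hk => (hu_haar k hk).1).tendsto_inner_atTop_zero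
        _).norm.eventually_lt_const (by simpa using hε)).exists
  refine exists_state_approx_of_mem_closure φ π ξ hφ F hε
    (mem_closure_image_apply_star_apply_of_mem_centralizer_centralizer π.range
      (hN ▸ pow_mem hu_mem n) ξ)
    (by rw [ContinuousLinearMap.norm_map_of_mem_unitary (Unitary.star_mem (pow_mem hu n)), hξ]) hn
    fun x _ => ?_
  rw [inner_pow_apply_eq_of_forall_inner_conj_eq (M := N)
    (fun T hT => mul_mem (mul_mem (star_mem hu_mem) hT) hu_mem) hu_fix n
    (by rw [hN]; exact Set.subset_centralizer_centralizer ⟨x, rfl⟩), hφ]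

/-- Let `φ` be a state on a unital C*-algebra `B` realized as the vector state of a
unital star-representation `π` on `H` with cyclic unit vector `ξ`, and let `M` be the
double commutant of `π(B)` in `B(H)`. Suppose there is a unitary `u ∈ M` with
`⟨u^k ξ, ξ⟩ = 0` for all integers `k ≠ 0` (equivalently `⟨u^k ξ, ξ⟩ = ⟨(u*)^k ξ, ξ⟩ = 0`
for all natural numbers `k ≠ 0`) and `⟨u* T u ξ, ξ⟩ = ⟨T ξ, ξ⟩` for all `T ∈ M`. Then
for every finite `F ⊆ B` and `ε > 0` there is `b ∈ B` with `|φ(b b*) - 1| < ε`,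
`|φ(x b)| < ε` and `|φ(b* x b) - φ(x)| < ε` for all `x ∈ F`. -/
theorem haar_unitary_approximation {B : Type} [NormedRing B] [StarRing B] [CStarRing B]
    [NormedAlgebra ℂ B] [CompleteSpace B] [StarModule ℂ B]
    (φ : B →ₗ[ℂ] ℂ)
    {H : Type} [NormedAddCommGroup H] [InnerProductSpace ℂ H] [CompleteSpace H]
    (π : B →⋆ₐ[ℂ] (H →L[ℂ] H))
    (ξ : H) (hξ : ‖ξ‖ = 1) (hcyclic : DenseRange fun b : B => π b ξ)
    (hφ : ∀ x : B, φ x = ⟪ξ, π x ξ⟫_ℂ)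
    (M : Set (H →L[ℂ] H))
    (hM : M = Set.centralizer (Set.centralizer (Set.range fun b : B => π b)))
    (u : H →L[ℂ] H) (hu_mem : u ∈ M)
    (hu_unitary : u * star u = 1 ∧ star u * u = 1)
    (hu_haar : ∀ k : ℕ, k ≠ 0 → ⟪ξ, (u ^ k) ξ⟫_ℂ = 0 ∧ ⟪ξ, ((star u) ^ k) ξ⟫_ℂ = 0)
    (hu_fix : ∀ T ∈ M, ⟪ξ, (star u * T * u) ξ⟫_ℂ = ⟪ξ, T ξ⟫_ℂ)
    (F : Finset B) (ε : ℝ) (hε : 0 < ε) :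
    ∃ b : B, ‖φ (b * star b) - 1‖ < ε ∧
      ∀ x ∈ F, ‖φ (x * b)‖ < ε ∧ ‖φ (star b * x * b) - φ x‖ < ε :=
  haar_unitary_approximation_general φ π ξ hξ hφ M hM u hu_mem hu_unitary hu_haar hu_fix F ε hε
end
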